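/- Let Φ = |φ⟩⟨φ| with φ = (|00⟩ + |11⟩)/√2, let Π₀ = |00⟩⟨00|, and for 0 < p ≤ 1 let S_H = p·Φ + (1−p)·Π₀ be the Horodecki-type state. For 0 < p < 1 we have Cor_{S_H}(σ₁, σ₁) = p, Cor_{S_H}(σ₂, σ₂) = −p, and Cor_{S_H}(σ₃, σ₃) = 1, so Σ_{i=1}^{3} |Cor_{S_H}(σᵢ, σᵢ)| = 1 + 2p > 1 for every 0 < p < 1. -/

import Mathlib

/-!
Expectations are affine in the state, and on the two pure components they are explicit:
`⟨φ|A ⊗ B|φ⟩ = tr(A Bᵀ)/2` and `⟨00|A ⊗ B|00⟩ = A₀₀ B₀₀`. For `σ₁` and `σ₂` all one-sided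
expectations vanish, so the correlation is `E(σᵢ ⊗ σᵢ) = ±p` (the sign because `σ₂ᵀ = -σ₂`).
For `σ₃` both one-sided expectations equal `1 - p` while `E(σ₃ ⊗ σ₃) = 1`, so the covariance
coincides with the (nonzero) variances.
-/

open Matrix Complex
open scoped Kronecker ComplexConjugate ComplexOrder

noncomputable section

abbrev M2 : Type := Matrix (Fin 2) (Fin 2) ℂ
abbrev M4 : Type := Matrix (Fin 2 × Fin 2) (Fin 2 × Fin 2) ℂ

/-- Pauli matrix σ₁. -/
def σ1 : M2 := !![0, 1; 1, 0]
/-- Pauli matrix σ₂. -/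
def σ2 : M2 := !![0, -Complex.I; Complex.I, 0]
/-- Pauli matrix σ₃. -/
def σ3 : M2 := !![1, 0; 0, -1]

/-- The Pauli triple (σ₁, σ₂, σ₃). -/
def pauli : Fin 3 → M2 := ![σ1, σ2, σ3]

/-- A dichotomic observable: Hermitian, squares to the identity, traceless. -/
def Dichotomic (A : M2) : Prop := A.IsHermitian ∧ A * A = 1 ∧ A.trace = 0

/-- A complementary triple of dichotomic observables. -/
def ComplementaryTriple (X : Fin 3 → M2) : Prop :=
  (∀ i, Dichotomic (X i)) ∧ ∀ i j, i ≠ j → (X i * X j).trace = 0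

/-- Expectation value E_S(A ⊗ B) = tr(S·(A⊗B)) (its real part; it is real for states and
Hermitian observables). -/
def EE (S : M4) (A B : M2) : ℝ := (Matrix.trace (S * (A ⊗ₖ B))).re

/-- Covariance of A and B in the state S. -/
def Cov (S : M4) (A B : M2) : ℝ := EE S A B - EE S A 1 * EE S 1 B

/-- Variance of a dichotomic observable A measured on the first subsystem. -/
def Var1 (S : M4) (A : M2) : ℝ := 1 - (EE S A 1) ^ 2
/-- Variance of a dichotomic observable B measured on the second subsystem. -/
def Var2 (S : M4) (B : M2) : ℝ := 1 - (EE S 1 B) ^ 2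

/-- The Pearson correlation coefficient of observables A and B in the state S. -/
def Cor (S : M4) (A B : M2) : ℝ := Cov S A B / Real.sqrt (Var1 S A * Var2 S B)

/-- The rank-one projection |v⟩⟨v| onto a vector v ∈ ℂ⁴ ≅ ℂ²⊗ℂ². -/
def proj4 (v : Fin 2 × Fin 2 → ℂ) : M4 := Matrix.vecMulVec v (star v)

/-- The Bell vector φ = (|00⟩ + |11⟩)/√2. -/
def bellVec : Fin 2 × Fin 2 → ℂ := fun p =>
  if p = (0, 0) ∨ p = (1, 1) then (1 / Real.sqrt 2 : ℝ) else 0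

/-- The vector |00⟩. -/
def ket00 : Fin 2 × Fin 2 → ℂ := fun p => if p = (0, 0) then 1 else 0

theorem trace_vecMulVec_mul {n R : Type*} [Fintype n] [CommSemiring R]
    (v w : n → R) (M : Matrix n n R) : trace (vecMulVec v w * M) = v ⬝ᵥ (w ᵥ* M) := by
  rw [vecMulVec_mul, trace_vecMulVec]

theorem EE_ofReal_smul_add (a b : ℝ) (S T : M4) (A B : M2) :
    EE ((a : ℂ) • S + (b : ℂ) • T) A B = a * EE S A B + b * EE T A B := by
  simp only [EE, Matrix.add_mul, Matrix.smul_mul, trace_add, trace_smul, smul_eq_mul,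
    add_re, re_ofReal_mul]

theorem EE_proj4_ket00 (A B : M2) : EE (proj4 ket00) A B = (A 0 0 * B 0 0).re := by
  simp [EE, proj4, trace_vecMulVec_mul, dotProduct, vecMul, ket00]

theorem EE_proj4_bellVec (A B : M2) : EE (proj4 bellVec) A B = (trace (A * Bᵀ)).re / 2 := by
  rw [EE, proj4, trace_vecMulVec_mul]
  simp only [dotProduct, bellVec, Fin.isValue, one_div, ofReal_inv, vecMul, Pi.star_apply,
    RCLike.star_def, kroneckerMap_apply, Fintype.sum_prod_type, Prod.mk.injEq, Fin.sum_univ_two,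
    and_true, zero_ne_one, and_false, or_false, one_ne_zero, false_or, ↓reduceIte, map_inv₀,
    conj_ofReal, map_zero, zero_mul, add_zero, zero_add, ite_mul, add_re, mul_re, inv_re, ofReal_re,
    normSq_ofReal, Nat.ofNat_nonneg, Real.mul_self_sqrt, inv_im, ofReal_im, neg_zero, zero_div,
    mul_im, sub_zero, add_im, trace, diag_apply, mul_apply, transpose_apply]
  field_simp
  rw [Real.sq_sqrt zero_le_two]
  ring

theorem Cor_eq_EE_of_marginals_eq_zero {S : M4} {A B : M2} (hA : EE S A 1 = 0)
    (hB : EE S 1 B = 0) : Cor S A B = EE S A B := by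
  simp [Cor, Cov, Var1, Var2, hA, hB]

theorem Cor_eq_one_of_EE_eq_one {S : M4} {A B : M2} (hAB : EE S A B = 1)
    (hmarg : EE S 1 B = EE S A 1) (hA : |EE S A 1| < 1) : Cor S A B = 1 := by
  have hvar : 0 < Var1 S A := sub_pos.mpr (sq_lt_one_iff_abs_lt_one _ |>.mpr hA)
  rw [Cor, Cov, Var2, hAB, hmarg, ← sq, ← Var1, ← sq, Real.sqrt_sq hvar.le, div_self hvar.ne']

/-- for the Horodecki-type state S_H = p·Φ + (1−p)·|00⟩⟨00| with 0 < p < 1,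
Cor(σ₁,σ₁) = p, Cor(σ₂,σ₂) = −p, Cor(σ₃,σ₃) = 1, and the sum of absolute PCC's equals
1 + 2p, which exceeds 1. -/
theorem horodecki_state_correlations (p : ℝ) (hp0 : 0 < p) (hp1 : p < 1) (SH : M4)
    (hform : SH = (p : ℂ) • proj4 bellVec + ((1 - p : ℝ) : ℂ) • proj4 ket00) :
    Cor SH σ1 σ1 = p ∧
    Cor SH σ2 σ2 = -p ∧
    Cor SH σ3 σ3 = 1 ∧
    ∑ i : Fin 3, |Cor SH (pauli i) (pauli i)| = 1 + 2 * p ∧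
    1 < ∑ i : Fin 3, |Cor SH (pauli i) (pauli i)| := by
  have hE (A B : M2) :
      EE SH A B = p * ((trace (A * Bᵀ)).re / 2) + (1 - p) * (A 0 0 * B 0 0).re := by
    rw [hform, EE_ofReal_smul_add, EE_proj4_bellVec, EE_proj4_ket00]
  have c1 : Cor SH σ1 σ1 = p := by
    rw [Cor_eq_EE_of_marginals_eq_zero] <;>
      simp [hE, σ1, trace_fin_two, vecMul, dotProduct, Fin.sum_univ_two]
  have c2 : Cor SH σ2 σ2 = -p := by
    rw [Cor_eq_EE_of_marginals_eq_zero] <;>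
      simp [hE, σ2, trace_fin_two, vecMul, dotProduct, Fin.sum_univ_two]
  have marg3 : EE SH σ3 1 = 1 - p := by simp [hE, σ3, trace_fin_two]
  have marg3_lt : |EE SH σ3 1| < 1 := by
    rw [marg3]
    exact abs_lt.mpr ⟨by linarith, by linarith⟩
  have c3 : Cor SH σ3 σ3 = 1 := by
    refine Cor_eq_one_of_EE_eq_one ?_ ?_ marg3_lt
    all_goals simp [hE, σ3, trace_fin_two, vecMul, dotProduct, Fin.sum_univ_two]
  have hsum : ∑ i : Fin 3, |Cor SH (pauli i) (pauli i)| = 1 + 2 * p := by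
    rw [Fin.sum_univ_three]
    simp only [pauli, cons_val_zero, cons_val_one, cons_val, c1, c2, c3, abs_neg, abs_one,
      abs_of_pos hp0]
    ring
  exact ⟨c1, c2, c3, hsum, by linarith⟩
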